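/- arXiv:math/0312486 — 4 statements merged into one kernel-verified Lean document; each statement's English description precedes it below -/
import Mathlib

section
/- Let R be an F-finite F-pure reduced ring of characteristic p > 0 and a ⊆ R an ideal with a ∩ R° ≠ ∅. Then c(a) = sup{ s ∈ ℝ_{≥0} : the pair (R, a^s) is strongly F-pure }. -/
/-! Basic notions for F-pure thresholds (Takagi–Watanabe).
Fix a prime `p`. For `q = p ^ e`, `SplitsFrob R q d` says that the map
`d^{1/q} R ↪ R^{1/q}` splits as an `R`-module homomorphism: equivalently, there is an
additive map `ψ : R → R` with `ψ (r ^ q * x) = r * ψ x` for all `r x : R` and `ψ d = 1`. -/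
def SplitsFrob (R : Type*) [CommRing R] (q : ℕ) (d : R) : Prop :=
  ∃ ψ : R →+ R, (∀ r x : R, ψ (r ^ q * x) = r * ψ x) ∧ ψ d = 1

/-- `R°`: the set of elements of `R` not contained in any minimal prime of `R`. -/
def Rcirc (R : Type*) [CommRing R] : Set R :=
  {x : R | ∀ P ∈ minimalPrimes R, x ∉ P}

/-- The pair `(R, a^t)` is F-pure: for all sufficiently large `q = p ^ e` there exists
`d ∈ a ^ ⌊t (q - 1)⌋` such that `d^{1/q} R ↪ R^{1/q}` splits. -/
def FPurePair (R : Type*) [CommRing R] (p : ℕ) (a : Ideal R) (t : ℝ) : Prop :=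
  ∃ e₀ : ℕ, ∀ e : ℕ, e₀ ≤ e →
    ∃ d ∈ a ^ ⌊t * ((p : ℝ) ^ e - 1)⌋₊, SplitsFrob R (p ^ e) d

/-- The pair `(R, a^t)` is strongly F-pure: there exist `q = p ^ e` and
`d ∈ a ^ ⌈t q⌉` such that `d^{1/q} R ↪ R^{1/q}` splits. -/
def StronglyFPurePair (R : Type*) [CommRing R] (p : ℕ) (a : Ideal R) (t : ℝ) : Prop :=
  ∃ e : ℕ, ∃ d ∈ a ^ ⌈t * (p : ℝ) ^ e⌉₊, SplitsFrob R (p ^ e) d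

/-- The pair `(R, a^t)` is strongly F-regular: for every `c ∈ R°` there exist `q = p ^ e`
and `d ∈ a ^ ⌈t q⌉` such that `(c d)^{1/q} R ↪ R^{1/q}` splits. -/
def StronglyFRegularPair (R : Type*) [CommRing R] (p : ℕ) (a : Ideal R) (t : ℝ) : Prop :=
  ∀ c ∈ Rcirc R, ∃ e : ℕ, ∃ d ∈ a ^ ⌈t * (p : ℝ) ^ e⌉₊, SplitsFrob R (p ^ e) (c * d)

/-- `R` is F-pure: for every `q = p ^ e`, the map `R ↪ R^{1/q}` splits. -/
def FPureRing (R : Type*) [CommRing R] (p : ℕ) : Prop :=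
  ∀ e : ℕ, SplitsFrob R (p ^ e) 1

/-- `R` is strongly F-regular: for every `c ∈ R°` there is `q = p ^ e` such that
`c^{1/q} R ↪ R^{1/q}` splits. -/
def StronglyFRegularRing (R : Type*) [CommRing R] (p : ℕ) : Prop :=
  ∀ c ∈ Rcirc R, ∃ e : ℕ, SplitsFrob R (p ^ e) c

/-- `R` is F-finite: `R^{1/p}` is a finitely generated `R`-module; equivalently, there is a
finite set `s` such that every element of `R` is an `R^p`-linear combination of `s`. -/
def FFinite (R : Type*) [CommRing R] (p : ℕ) : Prop :=
  ∃ s : Finset R, ∀ x : R, ∃ c : R → R, x = ∑ y ∈ s, c y ^ p * y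

/-- The F-pure threshold `c(a)` of an ideal `a`. -/
noncomputable def fpt (R : Type*) [CommRing R] (p : ℕ) (a : Ideal R) : ℝ :=
  sSup {s : ℝ | 0 ≤ s ∧ FPurePair R p a s}

/-- The height of an ideal: the infimum of the heights of the primes containing it. -/
noncomputable def idealHeight {R : Type*} [CommRing R] (I : Ideal R) : ℕ∞ :=
  ⨅ (P : PrimeSpectrum R) (_ : I ≤ P.asIdeal), Order.height P

/-! Splittings compose: a splitting of `d^{1/q}` together with one of `1^{1/q'}` gives a
splitting of `(d^{q'})^{1/qq'} = d^{1/q}`. Hence a strongly F-pure pair `(R, a^s)` is F-pure,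
by raising a witness `d ∈ a^⌈s q⌉` to `q'`-th powers. Conversely, if `(R, a^t)` is F-pure and
`s < t`, then `⌈s q⌉ ≤ ⌊t (q - 1)⌋` once `q` is large, so `(R, a^s)` is strongly F-pure. Thus
the two sets of exponents have the same upper bounds, hence the same supremum. -/

section

variable {R : Type*} [CommRing R] {p : ℕ}

lemma SplitsFrob.mul_pow {q q' : ℕ} {d : R}
    (h : SplitsFrob R q d) (h1 : SplitsFrob R q' 1) : SplitsFrob R (q * q') (d ^ q') := by
  obtain ⟨ψ, hψ, hψd⟩ := h
  obtain ⟨φ, hφ, hφ1⟩ := h1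
  have hφd : φ (d ^ q') = d := by simpa [hφ1] using hφ d 1
  refine ⟨ψ.comp φ, fun r x => ?_, ?_⟩
  · simp only [AddMonoidHom.comp_apply, pow_mul, hφ, hψ]
  · simp only [AddMonoidHom.comp_apply, hφd, hψd]

lemma StronglyFPurePair.zero (hFP : FPureRing R p)
    (a : Ideal R) : StronglyFPurePair R p a 0 :=
  ⟨0, 1, by simp, by simpa using hFP 0⟩

lemma StronglyFPurePair.fPurePair (hFP : FPureRing R p)
    {a : Ideal R} {t : ℝ} (ht : 0 ≤ t) (h : StronglyFPurePair R p a t) :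
    FPurePair R p a t := by
  obtain ⟨e, d, hd, hsplit⟩ := h
  refine ⟨e, fun e' he' => ?_⟩
  obtain ⟨k, rfl⟩ := Nat.exists_eq_add_of_le he'
  refine ⟨d ^ p ^ k, ?_, by simpa only [pow_add] using hsplit.mul_pow (hFP k)⟩
  have hexp : t * ((p : ℝ) ^ (e + k) - 1) ≤ (⌈t * (p : ℝ) ^ e⌉₊ * p ^ k : ℕ) :=
    calc t * ((p : ℝ) ^ (e + k) - 1) ≤ t * (p : ℝ) ^ e * (p : ℝ) ^ k := by
          rw [pow_add]; nlinarith
      _ ≤ (⌈t * (p : ℝ) ^ e⌉₊ : ℝ) * (p : ℝ) ^ k := by gcongr; exact Nat.le_ceil _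
      _ = _ := by push_cast; rfl
  refine Ideal.pow_le_pow_right (Nat.floor_le_of_le hexp) ?_
  rw [pow_mul]
  exact Ideal.pow_mem_pow hd _

lemma FPurePair.stronglyFPurePair_of_lt (hp : 1 < p)
    {a : Ideal R} {s t : ℝ} (hs : 0 ≤ s) (hst : s < t) (h : FPurePair R p a t) :
    StronglyFPurePair R p a s := by
  obtain ⟨e₀, h⟩ := h
  have hp1 : (1 : ℝ) < p := by exact_mod_cast hp
  obtain ⟨e₁, he₁⟩ := pow_unbounded_of_one_lt ((1 + t) / (t - s)) hp1
  set e := max e₀ e₁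
  have hpe : (1 + t) / (t - s) < (p : ℝ) ^ e :=
    he₁.trans_le (pow_le_pow_right₀ hp1.le (le_max_right _ _))
  have hgap : s * (p : ℝ) ^ e + 1 ≤ t * ((p : ℝ) ^ e - 1) := by
    nlinarith [(div_lt_iff₀ (sub_pos.mpr hst)).mp hpe]
  obtain ⟨d, hd, hsplit⟩ := h e (le_max_left _ _)
  refine ⟨e, d, Ideal.pow_le_pow_right (Nat.le_floor ?_) hd, hsplit⟩
  linarith [Nat.ceil_lt_add_one (by positivity : 0 ≤ s * (p : ℝ) ^ e)]

end

lemma Real.sSup_eq_of_subset_of_forall_exists_gt {A B : Set ℝ} (hBA : B ⊆ A)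
    (h : ∀ x ∈ A, ∀ y < x, ∃ b ∈ B, y < b) : sSup A = sSup B := by
  have hub : upperBounds A = upperBounds B := by
    refine (upperBounds_mono_set hBA).antisymm fun M hM x hx => le_of_forall_lt fun y hy => ?_
    obtain ⟨b, hb, hyb⟩ := h x hx y hy
    exact hyb.trans_le (hM hb)
  rcases A.eq_empty_or_nonempty with rfl | hA
  · rw [Set.subset_empty_iff.mp hBA]
  have hB : B.Nonempty := by
    obtain ⟨x, hx⟩ := hA
    obtain ⟨b, hb, -⟩ := h x hx (x - 1) (by linarith)
    exact ⟨b, hb⟩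
  by_cases hbdd : BddAbove A
  · exact ((isLUB_congr hub).mp (isLUB_csSup hA hbdd)).csSup_eq hB |>.symm
  · have hbddB : ¬BddAbove B := by rwa [BddAbove, ← hub]
    rw [Real.sSup_of_not_bddAbove hbdd, Real.sSup_of_not_bddAbove hbddB]

theorem stmt2_general (R : Type*) [CommRing R]
    (p : ℕ) (hp : p.Prime) (hFP : FPureRing R p)
    (a : Ideal R) :
    fpt R p a = sSup {s : ℝ | 0 ≤ s ∧ StronglyFPurePair R p a s} := by
  refine Real.sSup_eq_of_subset_of_forall_exists_gt
    (fun s hs => ⟨hs.1, hs.2.fPurePair hFP hs.1⟩) fun x hx y hy => ?_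
  rcases lt_or_ge y 0 with hy0 | hy0
  · exact ⟨0, ⟨le_rfl, .zero hFP a⟩, hy0⟩
  · refine ⟨(x + y) / 2, ⟨by linarith, ?_⟩, by linarith⟩
    exact hx.2.stronglyFPurePair_of_lt hp.one_lt (by linarith) (by linarith)

/-- `c(a)` equals the supremum of all `s ≥ 0` such that `(R, aˢ)` is
strongly F-pure. -/
theorem stmt2 (R : Type*) [CommRing R] [IsNoetherianRing R] [IsReduced R]
    (p : ℕ) (hp : p.Prime) [CharP R p] (hFF : FFinite R p) (hFP : FPureRing R p)
    (a : Ideal R) (ha : ((a : Set R) ∩ Rcirc R).Nonempty) :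
    fpt R p a = sSup {s : ℝ | 0 ≤ s ∧ StronglyFPurePair R p a s} :=
  stmt2_general R p hp hFP a
end

section
/- Let R be an F-finite F-pure reduced ring of characteristic p > 0 and a ⊆ R an ideal with a ∩ R° ≠ ∅. Then c(a) = c(ā), where ā denotes the integral closure of a. -/
/-- The integral closure of an ideal `a`: the set of `x ∈ R` satisfying an equation
`x ^ n + a₁ * x ^ (n-1) + ⋯ + aₙ = 0` for some `n ≥ 1` with `aᵢ ∈ a ^ i`. -/
def idealIntegralClosure {R : Type*} [CommRing R] (a : Ideal R) : Set R :=
  {x : R | ∃ n : ℕ, 0 < n ∧ ∃ c : ℕ → R, (∀ i, 1 ≤ i → i ≤ n → c i ∈ a ^ i) ∧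
    x ^ n + ∑ i ∈ Finset.Icc 1 n, c i * x ^ (n - i) = 0}

/-! If `ā ^ i ⊆ a ^ (i - n)` for all `i`, then for `s < t` and `q` large the exponents
`⌊t (q - 1)⌋` and `⌊s (q - 1)⌋` differ by more than `n`, so a splitting witness for `(R, ā ^ t)`
is one for `(R, a ^ s)`; together with `a ⊆ ā` this squeezes the two thresholds together.
Such an `n` exists in a Noetherian ring: for a single integral element it comes from the equation
of integral dependence, and the binomial formula makes the bound add up along finitely many
generators of `ā`. -/

open Filter

namespace Ideal

variable {R : Type*} [CommRing R]

theorem sup_pow_le_pow_sub {a K₁ K₂ : Ideal R} {n₁ n₂ : ℕ}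
    (h₁ : ∀ i, K₁ ^ i ≤ a ^ (i - n₁)) (h₂ : ∀ i, K₂ ^ i ≤ a ^ (i - n₂)) (i : ℕ) :
    (K₁ ⊔ K₂) ^ i ≤ a ^ (i - (n₁ + n₂)) := by
  rw [← add_eq_sup, add_pow, sum_eq_sup]
  refine Finset.sup_le fun j hj => ?_
  have hji : j ≤ i := Nat.lt_succ_iff.mp (Finset.mem_range.mp hj)
  calc K₁ ^ j * K₂ ^ (i - j) * (i.choose j : Ideal R)
      ≤ a ^ (j - n₁) * a ^ (i - j - n₂) :=
        mul_le_left.trans (mul_le_mul' (h₁ j) (h₂ (i - j)))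
    _ ≤ a ^ (i - (n₁ + n₂)) := by rw [← pow_add]; exact pow_le_pow_right (by omega)

theorem exists_pow_mem_pow_sub_of_mem_idealIntegralClosure {a : Ideal R} {x : R}
    (hx : x ∈ idealIntegralClosure a) : ∃ n, ∀ i, x ^ i ∈ a ^ (i - n) := by
  obtain ⟨n, -, c, hc, heq⟩ := hx
  refine ⟨n, fun i => Nat.strong_induction_on i fun i ih => ?_⟩
  rcases lt_or_ge i n with hin | hni
  · simp [Nat.sub_eq_zero_of_le hin.le]
  have hxi : x ^ i = -∑ k ∈ Finset.Icc 1 n, c k * x ^ (i - k) := by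
    rw [show i = (i - n) + n by omega, pow_add, eq_neg_of_add_eq_zero_left heq,
      mul_neg, Finset.mul_sum]
    congr 1
    refine Finset.sum_congr rfl fun k hk => ?_
    obtain ⟨hk1, hkn⟩ := Finset.mem_Icc.mp hk
    rw [mul_left_comm, ← pow_add]
    congr 2
    omega
  rw [hxi]
  refine neg_mem (sum_mem _ fun k hk => ?_)
  obtain ⟨hk1, hkn⟩ := Finset.mem_Icc.mp hk
  have hmem := mul_mem_mul (hc k hk1 hkn) (ih (i - k) (by omega))
  rw [← pow_add] at hmem
  exact pow_le_pow_right (by omega) hmem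

theorem exists_span_pow_le_pow_sub {a : Ideal R} (s : Finset R)
    (h : ∀ x ∈ s, ∃ n, ∀ i, x ^ i ∈ a ^ (i - n)) :
    ∃ n, ∀ i, span (s : Set R) ^ i ≤ a ^ (i - n) := by
  classical
  induction s using Finset.induction_on with
  | empty => exact ⟨0, fun i => by cases i <;> simp⟩
  | insert x s _ ih =>
    obtain ⟨n₁, hn₁⟩ := h x (Finset.mem_insert_self x s)
    obtain ⟨n₂, hn₂⟩ := ih fun y hy => h y (Finset.mem_insert_of_mem hy)
    refine ⟨n₁ + n₂, fun i => ?_⟩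
    rw [Finset.coe_insert, span_insert]
    refine sup_pow_le_pow_sub (fun j => ?_) hn₂ i
    rw [span_singleton_pow, span_singleton_le_iff_mem]
    exact hn₁ j

theorem le_span_idealIntegralClosure (a : Ideal R) : a ≤ span (idealIntegralClosure a) := by
  intro x hx
  refine subset_span ⟨1, one_pos, fun _ => -x, fun i h1 h2 => ?_, by simp⟩
  obtain rfl : i = 1 := le_antisymm h2 h1
  simpa using a.neg_mem hx

theorem exists_span_idealIntegralClosure_pow_le_pow_sub [IsNoetherianRing R] (a : Ideal R) :
    ∃ n, ∀ i, span (idealIntegralClosure a) ^ i ≤ a ^ (i - n) := by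
  obtain ⟨s, hs, hspan⟩ := (Submodule.fg_span_iff_fg_span_finset_subset _).mp
    (IsNoetherian.noetherian (span (idealIntegralClosure a)))
  rw [span, hspan]
  exact exists_span_pow_le_pow_sub s fun x hx =>
    exists_pow_mem_pow_sub_of_mem_idealIntegralClosure (hs hx)

end Ideal

theorem eventually_floor_mul_add_le_floor_mul {s t : ℝ} (hs : 0 ≤ s) (hst : s < t) (n : ℕ) :
    ∀ᶠ x : ℝ in atTop, ⌊s * x⌋₊ + n ≤ ⌊t * x⌋₊ := by
  filter_upwards [eventually_ge_atTop 0,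
    (tendsto_id.atTop_mul_const (sub_pos.mpr hst)).eventually_ge_atTop (n : ℝ)] with x hx hxn
  rw [← Nat.floor_add_natCast (mul_nonneg hs hx)]
  exact Nat.floor_le_floor (by simp only [id] at hxn; linarith)

theorem Real.sSup_eq_sSup_of_subset_of_forall_lt {S T : Set ℝ} (h0 : 0 ∈ S) (hST : S ⊆ T)
    (hTS : ∀ t ∈ T, ∀ s, 0 ≤ s → s < t → s ∈ S) : sSup S = sSup T := by
  have hbounds : upperBounds S = upperBounds T := by
    refine (upperBounds_mono_set hST).antisymm' fun b hb t ht => ?_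
    refine le_of_forall_lt_imp_le_of_dense fun s hst => ?_
    rcases lt_or_ge s 0 with hs | hs
    · exact hs.le.trans (hb h0)
    · exact hb (hTS t ht s hs hst)
  by_cases hT : BddAbove T
  · have hS : IsLUB S (sSup S) := isLUB_csSup ⟨0, h0⟩ (by rwa [BddAbove, hbounds])
    exact (((isLUB_congr hbounds).mp hS).csSup_eq ⟨0, hST h0⟩).symm
  · rw [Real.sSup_of_not_bddAbove hT, Real.sSup_of_not_bddAbove (by rwa [BddAbove, hbounds])]

section FPurePair

variable {R : Type*} [CommRing R] {p : ℕ}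

theorem fpurePair_zero (hFP : FPureRing R p) (a : Ideal R) : FPurePair R p a 0 :=
  ⟨0, fun e _ => ⟨1, by simp, hFP e⟩⟩

theorem FPurePair.mono_ideal {a b : Ideal R} {t : ℝ} (hab : a ≤ b) (h : FPurePair R p a t) :
    FPurePair R p b t := by
  obtain ⟨e₀, h⟩ := h
  refine ⟨e₀, fun e he => ?_⟩
  obtain ⟨d, hd, hsplit⟩ := h e he
  exact ⟨d, Ideal.pow_right_mono hab _ hd, hsplit⟩

theorem FPurePair.of_pow_le_pow_sub (hp : 1 < p) {a b : Ideal R} {n : ℕ}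
    (hb : ∀ i, b ^ i ≤ a ^ (i - n)) {s t : ℝ} (hs : 0 ≤ s) (hst : s < t)
    (h : FPurePair R p b t) : FPurePair R p a s := by
  have hq : Tendsto (fun e : ℕ => (p : ℝ) ^ e - 1) atTop atTop :=
    tendsto_atTop_add_const_right _ _ (tendsto_pow_atTop_atTop_of_one_lt (by exact_mod_cast hp))
  rw [FPurePair, ← eventually_atTop] at h ⊢
  filter_upwards [h, hq.eventually (eventually_floor_mul_add_le_floor_mul hs hst n)]
    with e ⟨d, hd, hsplit⟩ hfloor
  exact ⟨d, Ideal.pow_le_pow_right (by omega) (hb _ hd), hsplit⟩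

theorem fpt_eq_of_le_of_pow_le_pow_sub (hp : 1 < p) (hFP : FPureRing R p) {a b : Ideal R}
    {n : ℕ} (hab : a ≤ b) (hb : ∀ i, b ^ i ≤ a ^ (i - n)) : fpt R p a = fpt R p b :=
  Real.sSup_eq_sSup_of_subset_of_forall_lt ⟨le_rfl, fpurePair_zero hFP a⟩
    (fun _ ⟨hs, h⟩ => ⟨hs, h.mono_ideal hab⟩)
    (fun _ ⟨_, ht⟩ _ hs hst => ⟨hs, ht.of_pow_le_pow_sub hp hb hs hst⟩)

end FPurePair

theorem stmt5_general (R : Type*) [CommRing R] [IsNoetherianRing R]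
    (p : ℕ) (hp : p.Prime) (hFP : FPureRing R p)
    (a : Ideal R) :
    fpt R p a = fpt R p (Ideal.span (idealIntegralClosure a)) := by
  obtain ⟨n, hn⟩ := Ideal.exists_span_idealIntegralClosure_pow_le_pow_sub a
  exact fpt_eq_of_le_of_pow_le_pow_sub hp.one_lt hFP (Ideal.le_span_idealIntegralClosure a) hn

/-- `c(a) = c(ā)` where `ā` is the integral closure of `a`. -/
theorem stmt5 (R : Type*) [CommRing R] [IsNoetherianRing R] [IsReduced R]
    (p : ℕ) (hp : p.Prime) [CharP R p] (hFF : FFinite R p) (hFP : FPureRing R p)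
    (a : Ideal R) (ha : ((a : Set R) ∩ Rcirc R).Nonempty) :
    fpt R p a = fpt R p (Ideal.span (idealIntegralClosure a)) :=
  stmt5_general R p hp hFP a
end

section
/- Let (R, m) be an F-finite F-pure reduced local ring of characteristic p > 0 with infinite residue field R/m, and let I ⊊ R be a proper ideal of positive height. Let J ⊆ I be a reduction of I (i.e., there exists an integer s > 0 with I^{n+s} = J^n I^s for every integer n ≥ 0) which is generated by λ elements. If c(I) > λ − r for an integer r ≥ 1, then I^r ⊆ J. -/
/-! Pick `t > λ - r` with `(R, I^t)` F-pure and a large `q = p^e` with a splitting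
`ψ : R^{1/q} → R` sending `d^{1/q}` to `1`, where `d ∈ I^{⌊t(q-1)⌋}`. For `x ∈ I^r` the
product `x^q d` lies in `I^{rq + ⌊t(q-1)⌋} ⊆ I^{λq+1+s} ⊆ J^{λq+1}`, and by the pigeonhole
principle `J^{λq+1}` is contained in the ideal `J^{[q]}` generated by the `q`-th powers of the
`λ` generators of `J`. Applying `ψ` gives `x = ψ(x^q d) ∈ J`. -/

open Filter

lemma Ideal.span_pow_card_mul_add_one_le_span_image_pow {R : Type*} [CommRing R]
    (T : Finset R) (q : ℕ) :
    Ideal.span (T : Set R) ^ (T.card * q + 1) ≤ Ideal.span ((· ^ q) '' (T : Set R)) := by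
  classical
  induction T using Finset.induction_on with
  | empty => simp
  | @insert a T ha ih =>
    rw [Finset.coe_insert, Ideal.span_insert, Finset.card_insert_of_notMem ha,
      show (T.card + 1) * q + 1 = q + (T.card * q + 1) by ring]
    refine Ideal.sup_pow_add_le_pow_sup_pow.trans (sup_le ?_ (ih.trans ?_))
    · rw [Ideal.span_singleton_pow, Ideal.span_le, Set.singleton_subset_iff]
      exact Ideal.subset_span ⟨a, by simp⟩
    · exact Ideal.span_mono (Set.image_mono (by simp))

lemma SplitsFrob.mem_span_of_pow_mul_mem {R : Type*} [CommRing R] {q : ℕ} {d x : R}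
    {T : Set R} (hd : SplitsFrob R q d) (hx : x ^ q * d ∈ Ideal.span ((· ^ q) '' T)) :
    x ∈ Ideal.span T := by
  obtain ⟨ψ, hψ, hψd⟩ := hd
  -- `ψ` is only `R^q`-linear, so we track `ψ (a * z)` for every multiplier `a`.
  have key : ∀ z ∈ Ideal.span ((· ^ q) '' T), ∀ a : R, ψ (a * z) ∈ Ideal.span T := by
    intro z hz
    induction hz using Submodule.span_induction with
    | mem z hz =>
      obtain ⟨y, hy, rfl⟩ := hz
      intro a
      rw [mul_comm, hψ]
      exact Ideal.mul_mem_right _ _ (Ideal.subset_span hy)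
    | zero => simp
    | add z w _ _ hz hw => intro a; rw [mul_add, map_add]; exact add_mem (hz a) (hw a)
    | smul b z _ hz => intro a; rw [smul_eq_mul, ← mul_assoc]; exact hz (a * b)
  simpa [hψ, hψd] using key _ hx 1

lemma exists_fPurePair_gt_of_lt_fpt {R : Type*} [CommRing R] {p : ℕ} {I : Ideal R} {a : ℝ}
    (hFP : FPureRing R p) (ha : a < fpt R p I) : ∃ t, a < t ∧ FPurePair R p I t := by
  have h0 : (0 : ℝ) ∈ {s : ℝ | 0 ≤ s ∧ FPurePair R p I s} :=
    ⟨le_rfl, 0, fun e _ => ⟨1, by simp, hFP e⟩⟩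
  -- `sSup` of a set that is not bounded above is `0`, so that case needs its own argument.
  by_cases hb : BddAbove {s : ℝ | 0 ≤ s ∧ FPurePair R p I s}
  · obtain ⟨t, ⟨-, ht⟩, hat⟩ := exists_lt_of_lt_csSup ⟨0, h0⟩ ha
    exact ⟨t, hat, ht⟩
  · obtain ⟨t, ⟨-, ht⟩, hat⟩ := not_bddAbove_iff.1 hb a
    exact ⟨t, hat, ht⟩

lemma FPurePair.eventually {R : Type*} [CommRing R] {p : ℕ} {I : Ideal R} {t : ℝ}
    (h : FPurePair R p I t) :
    ∀ᶠ e in atTop, ∃ d ∈ I ^ ⌊t * ((p : ℝ) ^ e - 1)⌋₊, SplitsFrob R (p ^ e) d :=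
  eventually_atTop.2 h

lemma eventually_mul_pow_add_le_mul_pow_add_floor {p : ℕ} (hp : 1 < p) {lam r s : ℕ} {t : ℝ}
    (ht : (lam : ℝ) - r < t) :
    ∀ᶠ e in atTop, lam * p ^ e + s + 1 ≤ r * p ^ e + ⌊t * ((p : ℝ) ^ e - 1)⌋₊ := by
  have hp1 : (1 : ℝ) < p := by exact_mod_cast hp
  set ε := t - (lam - r)
  have hε : 0 < ε := by simp only [ε]; linarith
  filter_upwards [(tendsto_pow_atTop_atTop_of_one_lt hp1).eventually_gt_atTop
    ((lam + s + 2) / ε + 1)] with e he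
  -- `⌊t(q-1)⌋ > (λ - r)(q-1) + ε(q-1) - 1` and `ε(q-1) ≥ λ + s + 2` once `q` is large.
  have hgap : (lam : ℝ) + s + 2 ≤ ε * ((p : ℝ) ^ e - 1) := by
    rw [mul_comm, ← div_le_iff₀ hε]; linarith
  have hfloor : t * ((p : ℝ) ^ e - 1) - 1 < ⌊t * ((p : ℝ) ^ e - 1)⌋₊ := Nat.sub_one_lt_floor _
  have hq : (1 : ℝ) ≤ (p : ℝ) ^ e := one_le_pow₀ hp1.le
  have hr : (0 : ℝ) ≤ r := r.cast_nonneg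
  exact_mod_cast (show ((lam * p ^ e + s + 1 : ℕ) : ℝ) < (r * p ^ e + _ : ℕ) by
    push_cast; nlinarith).le

theorem stmt7_general (R : Type*) [CommRing R]
    (p : ℕ) (hp : p.Prime) (hFP : FPureRing R p)
    (I : Ideal R)
    (J : Ideal R)
    (hred : ∃ s : ℕ, 0 < s ∧ ∀ n : ℕ, I ^ (n + s) = J ^ n * I ^ s)
    (lam : ℕ) (hgen : ∃ T : Finset R, T.card = lam ∧ Ideal.span (T : Set R) = J)
    (r : ℕ) (hfpt : (lam : ℝ) - r < fpt R p I) :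
    I ^ r ≤ J := by
  obtain ⟨s, -, hIJ⟩ := hred
  obtain ⟨T, rfl, rfl⟩ := hgen
  obtain ⟨t, hlt, ht⟩ := exists_fPurePair_gt_of_lt_fpt hFP hfpt
  obtain ⟨e, ⟨d, hd, hsplit⟩, hexp⟩ :=
    (ht.eventually.and
      (eventually_mul_pow_add_le_mul_pow_add_floor hp.one_lt (s := s) hlt)).exists
  intro x hx
  have hxd : x ^ p ^ e * d ∈ I ^ (r * p ^ e + ⌊t * ((p : ℝ) ^ e - 1)⌋₊) := by
    rw [pow_add, pow_mul]
    exact Ideal.mul_mem_mul (Ideal.pow_mem_pow hx _) hd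
  refine hsplit.mem_span_of_pow_mul_mem (SetLike.le_def.1 ?_ hxd)
  calc I ^ (r * p ^ e + ⌊t * ((p : ℝ) ^ e - 1)⌋₊)
      ≤ I ^ (T.card * p ^ e + 1 + s) := Ideal.pow_le_pow_right (by omega)
    _ ≤ Ideal.span (T : Set R) ^ (T.card * p ^ e + 1) := by rw [hIJ]; exact Ideal.mul_le_left
    _ ≤ _ := Ideal.span_pow_card_mul_add_one_le_span_image_pow T _

/-- if `J ⊆ I` is a reduction of `I` generated by `λ` elements and
`c(I) > λ - r` for an integer `r ≥ 1`, then `I ^ r ⊆ J`. -/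
theorem stmt7 (R : Type*) [CommRing R] [IsNoetherianRing R] [IsReduced R] [IsLocalRing R]
    (p : ℕ) (hp : p.Prime) [CharP R p] (hFF : FFinite R p) (hFP : FPureRing R p)
    [Infinite (IsLocalRing.ResidueField R)]
    (I : Ideal R) (hI : I ≠ ⊤) (hht : 0 < idealHeight I)
    (J : Ideal R) (hJI : J ≤ I)
    (hred : ∃ s : ℕ, 0 < s ∧ ∀ n : ℕ, I ^ (n + s) = J ^ n * I ^ s)
    (lam : ℕ) (hgen : ∃ T : Finset R, T.card = lam ∧ Ideal.span (T : Set R) = J)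
    (r : ℕ) (hr : 1 ≤ r) (hfpt : (lam : ℝ) - r < fpt R p I) :
    I ^ r ≤ J :=
  stmt7_general R p hp hFP I J hred lam hgen r hfpt
end

section
/- Let k be an F-finite field of characteristic p > 0, R = k[[X,Y]] the two-dimensional power series ring, and f = X^a + Y^b ∈ R with integers a, b ≥ 2. Set r = ⌈p/a⌉ + ⌈p/b⌉ − 1. Then the F-pure threshold of the principal ideal (f) satisfies (r−1)/p ≤ c((f)) ≤ min{ r/p, 1/a + 1/b }. In particular, if p ≡ 1 (mod ab), then c((f)) = 1/a + 1/b. -/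
/-! In `R = k[[x, y]]`, `d^{1/q}` splits off `R^{1/q}` as soon as a monomial `x^i y^j` with
`i, j < q` occurs in `d` (project onto the corresponding basis vector of `R^{1/q}`), whereas no
`d ∈ (x^q, y^q)` splits, since an `R`-linear map `R^{1/q} → R` sends `(x^q, y^q)` into `(x, y)`.
For `f = x^a + y^b` the coefficient of `x^{ai} y^{b(N-i)}` in `f^N` is `C(N, i)`. So `(R, f^t)` is
F-pure once, for all large `q = p^e`, some `N ≥ ⌊t(q-1)⌋` and `i` satisfy `ai < q`, `b(N-i) < q`
and `p ∤ C(N, i)`; suitable `N, i` are found with Lucas' theorem. Conversely, F-purity forces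
`f^{⌊t(q-1)⌋} ∉ (x^q, y^q)`. This fails once `⌊t(q-1)⌋ ≥ q/a + q/b`, and, since `f^r ∈ (x^p, y^p)`
and so `f^{r p^e} ∈ (x^{p^{e+1}}, y^{p^{e+1}})`, also once `⌊t(p^{e+1}-1)⌋ ≥ r p^e`. -/

namespace SplitsFrob

variable {R : Type*} [CommRing R] {q : ℕ} {d : R}

theorem of_isUnit_apply (ψ : R →+ R) (hψ : ∀ r x : R, ψ (r ^ q * x) = r * ψ x)
    (hd : IsUnit (ψ d)) : SplitsFrob R q d := by
  obtain ⟨u, hu⟩ := hd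
  refine ⟨(AddMonoidHom.mulLeft (↑u⁻¹ : R)).comp ψ, fun r x => ?_, ?_⟩
  · simp only [AddMonoidHom.coe_comp, Function.comp_apply, AddMonoidHom.coe_mulLeft, hψ]
    ring
  · simp [← hu]

theorem of_mul {u : R} (h : SplitsFrob R q (u * d)) : SplitsFrob R q d := by
  obtain ⟨ψ, hψ, hψd⟩ := h
  refine ⟨ψ.comp (AddMonoidHom.mulLeft u), fun r x => ?_, hψd⟩
  simp only [AddMonoidHom.coe_comp, Function.comp_apply, AddMonoidHom.coe_mulLeft,
    mul_left_comm u, hψ]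

theorem apply_mem_of_mem_span_pow_image (ψ : R →+ R) (hψ : ∀ r x : R, ψ (r ^ q * x) = r * ψ x)
    {s : Set R} (hd : d ∈ Ideal.span ((· ^ q) '' s)) : ψ d ∈ Ideal.span s := by
  suffices ∀ z, ψ (z * d) ∈ Ideal.span s by simpa using this 1
  induction hd using Submodule.span_induction with
  | mem x hx =>
    obtain ⟨y, hy, rfl⟩ := hx
    intro z
    rw [mul_comm, hψ]
    exact Ideal.mul_mem_right _ _ (Ideal.subset_span hy)
  | zero => simp
  | add x y _ _ hx hy => exact fun z => by simpa [mul_add] using Ideal.add_mem _ (hx z) (hy z)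
  | smul r x _ hx => exact fun z => by simpa [mul_assoc] using hx (z * r)

theorem not_of_mem_span_pow_image {s : Set R} (hs : Ideal.span s ≠ ⊤)
    (hd : d ∈ Ideal.span ((· ^ q) '' s)) : ¬ SplitsFrob R q d := by
  rintro ⟨ψ, hψ, hψd⟩
  exact hs ((Ideal.eq_top_iff_one _).mpr (hψd ▸ apply_mem_of_mem_span_pow_image ψ hψ hd))

end SplitsFrob

theorem Ideal.pow_expChar_pow_mem_span_pow_image {R : Type*} [CommRing R] (p : ℕ) [ExpChar R p]
    {s : Set R} {q : ℕ} {g : R} (hg : g ∈ Ideal.span ((· ^ q) '' s)) (e : ℕ) :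
    g ^ p ^ e ∈ Ideal.span ((· ^ (q * p ^ e)) '' s) := by
  have := Ideal.mem_map_of_mem (iterateFrobenius R p e) hg
  rw [Ideal.map_span, Set.image_image] at this
  simpa [iterateFrobenius_def, ← pow_mul] using this

theorem Field.fPureRing (k : Type*) [Field k] (p : ℕ) [ExpChar k p] : FPureRing k p := by
  intro e
  set F := iterateFrobenius k p e
  obtain ⟨g, hg⟩ := (LinearMap.toSpanSingleton F.fieldRange k 1).exists_leftInverse_of_injective
    (LinearMap.ker_eq_bot.mpr (smul_left_injective _ one_ne_zero))
  refine ⟨F.rangeRestrictFieldEquiv.symm.toAddMonoidHom.comp g.toAddMonoidHom, fun c y => ?_, ?_⟩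
  · have : c ^ p ^ e * y = F.rangeRestrictFieldEquiv c • y := rfl
    simp [this]
  · have : g 1 = 1 := by simpa using LinearMap.congr_fun hg 1
    simp [this]

section FPureThreshold

variable {R : Type*} [CommRing R] {p : ℕ}

theorem FPurePair.exists_pow_floor_not_mem {f : R} {t : ℝ}
    (h : FPurePair R p (Ideal.span {f}) t) {s : Set R} (hs : Ideal.span s ≠ ⊤) :
    ∃ e₀, ∀ e ≥ e₀, f ^ ⌊t * ((p : ℝ) ^ e - 1)⌋₊ ∉ Ideal.span ((· ^ p ^ e) '' s) := by
  obtain ⟨e₀, he₀⟩ := h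
  refine ⟨e₀, fun e he hf => ?_⟩
  obtain ⟨d, hd, hsplit⟩ := he₀ e he
  rw [Ideal.span_singleton_pow, Ideal.mem_span_singleton] at hd
  obtain ⟨g, rfl⟩ := hd
  exact SplitsFrob.not_of_mem_span_pow_image hs (Ideal.mul_mem_right g _ hf) hsplit

variable {I : Ideal R} {c : ℝ}

theorem le_fpt (hbdd : ∀ s, FPurePair R p I s → s ≤ c) {t : ℝ} (ht : 0 ≤ t)
    (h : FPurePair R p I t) : t ≤ fpt R p I :=
  le_csSup ⟨c, fun s hs => hbdd s hs.2⟩ ⟨ht, h⟩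

theorem fpt_le (hc : 0 ≤ c) (hbdd : ∀ s, FPurePair R p I s → s ≤ c) : fpt R p I ≤ c :=
  Real.sSup_le (fun s hs => hbdd s hs.2) hc

end FPureThreshold

open Finset.HasAntidiagonal

namespace MvPowerSeries

variable {σ k : Type*}

instance [CommRing k] (p : ℕ) [ExpChar k p] : ExpChar (MvPowerSeries σ k) p :=
  expChar_of_injective_algebraMap C_injective p

theorem span_range_X_ne_top [CommRing k] [Nontrivial k] :
    Ideal.span (Set.range (X : σ → MvPowerSeries σ k)) ≠ ⊤ := by
  refine ne_top_of_le_ne_top (RingHom.ker_ne_top (constantCoeff (σ := σ) (R := k))) ?_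
  rw [Ideal.span_le]
  rintro _ ⟨i, rfl⟩
  simp

section Frobenius

variable [CommRing k] (p : ℕ) [ExpChar k p] {e : ℕ} {T : σ →₀ ℕ}

/- `r ^ p ^ e` is the Frobenius twist of `expand (p ^ e) r`, so only exponents in `p ^ e • _`
contribute; as `T < p ^ e`, such an exponent below `p ^ e • m + T` is `p ^ e • n` with `n ≤ m`. -/
theorem coeff_smul_add_pow_mul [DecidableEq σ] (hT : ∀ i, T i < p ^ e) (m : σ →₀ ℕ)
    (r x : MvPowerSeries σ k) :
    coeff (p ^ e • m + T) (r ^ p ^ e * x) =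
      ∑ n ∈ antidiagonal m, coeff n.1 r ^ p ^ e * coeff (p ^ e • n.2 + T) x := by
  have hp : p ≠ 0 := expChar_ne_zero k p
  have hq : p ^ e ≠ 0 := pow_ne_zero e hp
  rw [← map_iterateFrobenius_expand p hp r e, coeff_mul]
  symm
  refine Finset.sum_of_injOn (fun n => (p ^ e • n.1, p ^ e • n.2 + T)) ?_ ?_ ?_ ?_
  · rintro ⟨n₁, n₂⟩ - ⟨n₁', n₂'⟩ - h
    simp only [Prod.mk.injEq, add_left_inj, nsmul_right_inj hq] at h
    rw [h.1, h.2]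
  · rintro n hn
    simp only [Finset.mem_coe, mem_antidiagonal] at hn ⊢
    rw [← add_assoc, ← smul_add, hn]
  · rintro ⟨u, v⟩ huv hnot
    simp only [mem_antidiagonal] at huv
    by_cases hdvd : ∀ i, p ^ e ∣ u i
    · exfalso
      set n : σ →₀ ℕ := Finsupp.mapRange (· / p ^ e) (Nat.zero_div _) u
      have hn : p ^ e • n = u := by
        ext i
        simp [n, Nat.mul_div_cancel' (hdvd i)]
      have hnm : n ≤ m := by
        intro i
        have := congrArg (· i) huv
        simp only [Finsupp.add_apply, Finsupp.smul_apply, smul_eq_mul, ← hn] at this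
        have := hT i
        by_contra! h
        nlinarith
      refine hnot ⟨(n, m - n), by simp [add_tsub_cancel_of_le hnm], ?_⟩
      simp only [Prod.mk.injEq, hn, true_and]
      rw [← add_left_cancel_iff (a := u), huv, ← hn, ← add_assoc, ← smul_add,
        add_tsub_cancel_of_le hnm]
    · obtain ⟨i, hi⟩ := not_forall.mp hdvd
      simp [coeff_expand_of_not_dvd _ _ _ hi]
  · intro n _
    simp [coeff_expand_smul, iterateFrobenius_def]

/-- With `q = p ^ e`, the map `R^{1/q} → R` reading off the coordinate of the basis vector
`X^{T/q}` of `R^{1/q}` over `R`, coefficients being brought back to `k` by `π`. -/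
noncomputable def frobeniusProj (π : k →+ k) (q : ℕ) (T : σ →₀ ℕ) :
    MvPowerSeries σ k →+ MvPowerSeries σ k where
  toFun h m := π (coeff (q • m + T) h)
  map_zero' := funext fun _ => by rw [map_zero, map_zero]; rfl
  map_add' _ _ := funext fun _ => by rw [map_add, map_add]; rfl

theorem coeff_frobeniusProj (π : k →+ k) (q : ℕ) (T : σ →₀ ℕ) (h : MvPowerSeries σ k)
    (m : σ →₀ ℕ) : coeff m (frobeniusProj π q T h) = π (coeff (q • m + T) h) := rfl

theorem frobeniusProj_pow_mul {π : k →+ k} (hπ : ∀ c y : k, π (c ^ p ^ e * y) = c * π y)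
    (hT : ∀ i, T i < p ^ e) (r x : MvPowerSeries σ k) :
    frobeniusProj π (p ^ e) T (r ^ p ^ e * x) = r * frobeniusProj π (p ^ e) T x := by
  classical
  ext m
  simp only [coeff_frobeniusProj, coeff_smul_add_pow_mul p hT, map_sum, hπ, coeff_mul]

end Frobenius

theorem splitsFrob_of_coeff_ne_zero [Field k] (p : ℕ) [ExpChar k p] {e : ℕ} {T : σ →₀ ℕ}
    (hT : ∀ i, T i < p ^ e) {d : MvPowerSeries σ k} (hd : coeff T d ≠ 0) :
    SplitsFrob (MvPowerSeries σ k) (p ^ e) d := by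
  obtain ⟨π, hπ, hπ1⟩ := Field.fPureRing k p e
  refine SplitsFrob.of_mul (u := C (coeff T d)⁻¹) <|
    SplitsFrob.of_isUnit_apply _ (frobeniusProj_pow_mul p hπ hT) ?_
  rw [isUnit_iff_constantCoeff, ← coeff_zero_eq_constantCoeff_apply, coeff_frobeniusProj,
    smul_zero, zero_add, coeff_C_mul, inv_mul_cancel₀ hd, hπ1]
  exact isUnit_one

end MvPowerSeries

namespace Nat.Prime

variable {p : ℕ}

theorem not_dvd_choose_of_lt (hp : p.Prime) {n k : ℕ} (hn : n < p) (hk : k ≤ n) :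
    ¬ p ∣ n.choose k := fun h =>
  absurd (hp.dvd_factorial.mp (Nat.choose_mul_factorial_mul_factorial hk ▸
    dvd_mul_of_dvd_left (dvd_mul_of_dvd_left h _) _)) (by omega)

theorem not_dvd_choose_mul_add (hp : p.Prime) {n k c d : ℕ} (hc : c < p) (hdc : d ≤ c)
    (h : ¬ p ∣ n.choose k) : ¬ p ∣ (p * n + c).choose (p * k + d) := by
  have : Fact p.Prime := ⟨hp⟩
  have hlucas := (ZMod.intCast_eq_intCast_iff _ _ _).mpr
    (Choose.choose_modEq_choose_mod_mul_choose_div (p := p) (n := p * n + c) (k := p * k + d))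
  have hmod (x y : ℕ) (hy : y < p) : (p * x + y) % p = y := by
    rw [Nat.mul_add_mod, Nat.mod_eq_of_lt hy]
  have hdiv (x y : ℕ) (hy : y < p) : (p * x + y) / p = x := by
    rw [Nat.mul_add_div hp.pos, Nat.div_eq_of_lt hy, add_zero]
  rw [hmod _ _ hc, hmod _ _ (hdc.trans_lt hc), hdiv _ _ hc, hdiv _ _ (hdc.trans_lt hc)] at hlucas
  push_cast at hlucas
  rw [← ZMod.natCast_eq_zero_iff, hlucas]
  exact mul_ne_zero (mt (ZMod.natCast_eq_zero_iff _ _).mp (hp.not_dvd_choose_of_lt hc hdc))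
    (mt (ZMod.natCast_eq_zero_iff _ _).mp h)

theorem not_dvd_choose_mul_pow_add_pow_sub_one (hp : p.Prime) {c d : ℕ} (hc : c < p)
    (hdc : d ≤ c) (j : ℕ) : ¬ p ∣ (c * p ^ j + (p ^ j - 1)).choose (d * p ^ j) := by
  induction j with
  | zero => simpa using hp.not_dvd_choose_of_lt hc hdc
  | succ j ih =>
    have hpj : 1 ≤ p ^ j := Nat.one_le_pow _ _ hp.pos
    have hpj' : 1 ≤ p ^ (j + 1) := Nat.one_le_pow _ _ hp.pos
    have hn : c * p ^ (j + 1) + (p ^ (j + 1) - 1) =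
        p * (c * p ^ j + (p ^ j - 1)) + (p - 1) := by
      zify [hpj, hpj', hp.one_le]
      ring
    rw [hn, show d * p ^ (j + 1) = p * (d * p ^ j) + 0 by ring]
    exact hp.not_dvd_choose_mul_add (by omega) (Nat.zero_le _) ih

theorem not_dvd_choose_mul_geom_sum (hp : p.Prime) {c d : ℕ} (hc : c < p) (hdc : d ≤ c)
    (e : ℕ) :
    ¬ p ∣ (c * ∑ i ∈ Finset.range e, p ^ i).choose (d * ∑ i ∈ Finset.range e, p ^ i) := by
  induction e with
  | zero => simp [hp.one_lt.ne']
  | succ e ih =>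
    have hG : ∑ i ∈ Finset.range (e + 1), p ^ i = p * ∑ i ∈ Finset.range e, p ^ i + 1 := by
      rw [Finset.sum_range_succ', Finset.mul_sum]
      simp [pow_succ']
    rw [hG, mul_add_one, mul_add_one, mul_left_comm c, mul_left_comm d]
    exact hp.not_dvd_choose_mul_add hc hdc ih

end Nat.Prime

theorem le_of_forall_mul_pow_lt {x s α C : ℝ} (hx : 1 < x) {e₀ : ℕ}
    (h : ∀ e ≥ e₀, s * x ^ e < α * x ^ e + C) : s ≤ α := by
  by_contra! hlt
  obtain ⟨e, he⟩ := pow_unbounded_of_one_lt (C / (s - α)) hx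
  have hmono : x ^ e ≤ x ^ max e e₀ := pow_le_pow_right₀ hx.le (le_max_left _ _)
  have := h (max e e₀) (le_max_right _ _)
  rw [div_lt_iff₀ (sub_pos.mpr hlt)] at he
  nlinarith

theorem lt_ceil_div_iff {n a j : ℕ} (ha : 0 < a) : j < ⌈(n : ℝ) / a⌉₊ ↔ a * j < n := by
  rw [Nat.lt_ceil, lt_div_iff₀ (by positivity)]
  norm_cast
  rw [mul_comm]

theorem floor_div_mul_pow_sub_one_le {p : ℕ} (hp : 0 < p) (m j : ℕ) :
    ⌊(m : ℝ) / p * ((p : ℝ) ^ (j + 1) - 1)⌋₊ ≤ m * p ^ j - 1 := by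
  rcases Nat.eq_zero_or_pos m with rfl | hm
  · simp
  have hpj : (1 : ℝ) ≤ (p : ℝ) ^ (j + 1) := one_le_pow₀ (by exact_mod_cast hp)
  suffices ⌊(m : ℝ) / p * ((p : ℝ) ^ (j + 1) - 1)⌋₊ < m * p ^ j by omega
  rw [Nat.floor_lt (by positivity), div_mul_eq_mul_div, div_lt_iff₀ (by positivity)]
  push_cast
  have : (1 : ℝ) ≤ m := by exact_mod_cast hm
  rw [pow_succ]
  nlinarith

section BinomialSeries

variable {a b : ℕ}

theorem forall_le_mul_or_le_mul_sub_of_add_mul_le (ha : 0 < a) {q M : ℕ}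
    (hM : (a + b) * q ≤ a * b * M) : ∀ j ≤ M, q ≤ a * j ∨ q ≤ b * (M - j) := by
  intro j hj
  by_contra! h
  obtain ⟨l, rfl⟩ := Nat.exists_eq_add_of_le hj
  rw [Nat.add_sub_cancel_left] at h
  nlinarith

theorem forall_le_mul_or_le_mul_sub_ceil (ha : 0 < a) (hb : 0 < b) (q : ℕ) :
    ∀ j ≤ ⌈(q : ℝ) / a⌉₊ + ⌈(q : ℝ) / b⌉₊ - 1,
      q ≤ a * j ∨ q ≤ b * (⌈(q : ℝ) / a⌉₊ + ⌈(q : ℝ) / b⌉₊ - 1 - j) := by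
  intro j _
  have hja := (lt_ceil_div_iff (n := q) (j := j) ha).not
  have hjb := (lt_ceil_div_iff (n := q) (j := ⌈(q : ℝ) / a⌉₊ + ⌈(q : ℝ) / b⌉₊ - 1 - j) hb).not
  omega

open MvPowerSeries

variable {k : Type*}

theorem X_pow_add_X_pow_pow_mem_span_pow [CommRing k] {q M : ℕ}
    (hcover : ∀ j ≤ M, q ≤ a * j ∨ q ≤ b * (M - j)) :
    ((X 0 : MvPowerSeries (Fin 2) k) ^ a + X 1 ^ b) ^ M ∈
      Ideal.span ((· ^ q) '' Set.range (X : Fin 2 → MvPowerSeries (Fin 2) k)) := by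
  rw [add_pow]
  refine Ideal.sum_mem _ fun j hj => ?_
  have hmem (i : Fin 2) : (X i : MvPowerSeries (Fin 2) k) ^ q ∈
      Ideal.span ((· ^ q) '' Set.range (X : Fin 2 → MvPowerSeries (Fin 2) k)) :=
    Ideal.subset_span ⟨X i, ⟨i, rfl⟩, rfl⟩
  rw [← pow_mul, ← pow_mul]
  rcases hcover j (Nat.lt_succ_iff.mp (Finset.mem_range.mp hj)) with h | h
  · exact Ideal.mul_mem_right _ _ <| Ideal.mul_mem_right _ _ <|
      Ideal.pow_mem_of_pow_mem _ (hmem 0) h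
  · exact Ideal.mul_mem_right _ _ <| Ideal.mul_mem_left _ _ <|
      Ideal.pow_mem_of_pow_mem _ (hmem 1) h

theorem coeff_X_pow_add_X_pow_pow [CommRing k] (ha : 0 < a) {N i : ℕ} (hi : i ≤ N) :
    coeff (Finsupp.single 0 (a * i) + Finsupp.single 1 (b * (N - i)))
      (((X 0 : MvPowerSeries (Fin 2) k) ^ a + X 1 ^ b) ^ N) = (N.choose i : k) := by
  have hterm (j : ℕ) : ((X 0 : MvPowerSeries (Fin 2) k) ^ a) ^ j * (X 1 ^ b) ^ (N - j) *
      (N.choose j : MvPowerSeries (Fin 2) k) =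
      monomial (Finsupp.single 0 (a * j) + Finsupp.single 1 (b * (N - j))) (N.choose j : k) := by
    rw [← pow_mul, ← pow_mul, X_pow_eq, X_pow_eq, monomial_mul_monomial, one_mul,
      ← map_natCast (C (σ := Fin 2)), ← monomial_zero_eq_C_apply, monomial_mul_monomial,
      add_zero, one_mul]
  simp only [add_pow, hterm, map_sum, coeff_monomial]
  rw [Finset.sum_eq_single i]
  · simp
  · intro j _ hji
    rw [if_neg]
    intro h
    have := congrArg (· 0) h
    simp only [Finsupp.add_apply, Finsupp.single_eq_same, Finsupp.single_apply,
      Fin.one_eq_zero_iff, OfNat.ofNat_ne_one, if_false, add_zero] at this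
    exact hji (Nat.eq_of_mul_eq_mul_left ha this).symm
  · intro h
    exact absurd (Finset.mem_range.mpr (Nat.lt_succ_of_le hi)) h

variable [Field k] {p : ℕ}

theorem exists_mem_span_X_pow_add_X_pow_pow_splitsFrob [ExpChar k p]
    (ha : 0 < a) {e N i : ℕ} (hi : i ≤ N) (hai : a * i < p ^ e) (hbi : b * (N - i) < p ^ e)
    (hchoose : (N.choose i : k) ≠ 0) :
    ∃ d ∈ Ideal.span {(X 0 : MvPowerSeries (Fin 2) k) ^ a + X 1 ^ b} ^ N,
      SplitsFrob (MvPowerSeries (Fin 2) k) (p ^ e) d := by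
  set T : Fin 2 →₀ ℕ := Finsupp.single 0 (p ^ e - 1) + Finsupp.single 1 (p ^ e - 1)
  set E : Fin 2 →₀ ℕ :=
    Finsupp.single 0 (p ^ e - 1 - a * i) + Finsupp.single 1 (p ^ e - 1 - b * (N - i))
  refine ⟨monomial E 1 * ((X 0 : MvPowerSeries (Fin 2) k) ^ a + X 1 ^ b) ^ N, ?_, ?_⟩
  · rw [Ideal.span_singleton_pow, Ideal.mem_span_singleton]
    exact dvd_mul_left _ _
  have hT : ∀ j, T j < p ^ e := by
    intro j
    fin_cases j <;> simp [T] <;> omega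
  have hET : E ≤ T := by
    intro j
    fin_cases j <;> simp [E, T]
  have hTE : T - E = Finsupp.single 0 (a * i) + Finsupp.single 1 (b * (N - i)) := by
    ext j
    fin_cases j <;> simp [E, T] <;> omega
  refine splitsFrob_of_coeff_ne_zero p hT ?_
  rwa [coeff_monomial_mul, if_pos hET, one_mul, hTE, coeff_X_pow_add_X_pow_pow ha hi]

theorem fpurePair_X_pow_add_X_pow_of_forall_choose (hp : p.Prime) [CharP k p]
    (ha : 0 < a) {t : ℝ} (h : ∃ e₀, ∀ e ≥ e₀, ∃ N i, ⌊t * ((p : ℝ) ^ e - 1)⌋₊ ≤ N ∧ i ≤ N ∧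
      a * i < p ^ e ∧ b * (N - i) < p ^ e ∧ ¬ p ∣ N.choose i) :
    FPurePair (MvPowerSeries (Fin 2) k) p
      (Ideal.span {(X 0 : MvPowerSeries (Fin 2) k) ^ a + X 1 ^ b}) t := by
  have := ExpChar.prime (R := k) hp
  obtain ⟨e₀, he₀⟩ := h
  refine ⟨e₀, fun e he => ?_⟩
  obtain ⟨N, i, hN, hi, hai, hbi, hchoose⟩ := he₀ e he
  obtain ⟨d, hd, hsplit⟩ := exists_mem_span_X_pow_add_X_pow_pow_splitsFrob ha hi hai hbi
    (mt (CharP.cast_eq_zero_iff k p _).mp hchoose)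
  exact ⟨d, Ideal.pow_le_pow_right hN hd, hsplit⟩

theorem FPurePair.le_div_of_forall_le_mul_or_le_mul_sub (hp : p.Prime) [CharP k p] {r : ℕ}
    (hcover : ∀ j ≤ r, p ≤ a * j ∨ p ≤ b * (r - j)) {t : ℝ}
    (h : FPurePair (MvPowerSeries (Fin 2) k) p
      (Ideal.span {(X 0 : MvPowerSeries (Fin 2) k) ^ a + X 1 ^ b}) t) :
    t ≤ r / p := by
  have := ExpChar.prime (R := k) hp
  obtain ⟨e₀, he₀⟩ := h.exists_pow_floor_not_mem span_range_X_ne_top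
  have hfr := X_pow_add_X_pow_pow_mem_span_pow (k := k) hcover
  have hfloor : ∀ e ≥ e₀, ⌊t * ((p : ℝ) ^ (e + 1) - 1)⌋₊ < r * p ^ e := by
    intro e he
    by_contra! hle
    have hmem := Ideal.pow_expChar_pow_mem_span_pow_image p hfr e
    rw [← pow_mul, ← pow_succ'] at hmem
    exact he₀ (e + 1) (by omega) (Ideal.pow_mem_of_pow_mem _ hmem hle)
  rw [le_div_iff₀ (by exact_mod_cast hp.pos)]
  refine le_of_forall_mul_pow_lt (x := p) (C := t) (by exact_mod_cast hp.one_lt) (e₀ := e₀)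
    fun e he => ?_
  have h1 := Nat.lt_floor_add_one (t * ((p : ℝ) ^ (e + 1) - 1))
  have h2 := hfloor e he
  generalize ⌊t * ((p : ℝ) ^ (e + 1) - 1)⌋₊ = N at h1 h2
  have h3 : (N : ℝ) + 1 ≤ r * p ^ e := by exact_mod_cast h2
  rw [pow_succ] at h1
  linarith

theorem FPurePair.le_one_div_add_one_div (hp : p.Prime) (ha : 0 < a) (hb : 0 < b) {t : ℝ}
    (h : FPurePair (MvPowerSeries (Fin 2) k) p
      (Ideal.span {(X 0 : MvPowerSeries (Fin 2) k) ^ a + X 1 ^ b}) t) :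
    t ≤ 1 / a + 1 / b := by
  obtain ⟨e₀, he₀⟩ := h.exists_pow_floor_not_mem span_range_X_ne_top
  refine le_of_forall_mul_pow_lt (x := p) (C := t + 1) (by exact_mod_cast hp.one_lt) (e₀ := e₀)
    fun e he => ?_
  have h1 := Nat.lt_floor_add_one (t * ((p : ℝ) ^ e - 1))
  have hnot := he₀ e he
  generalize ⌊t * ((p : ℝ) ^ e - 1)⌋₊ = N at h1 hnot
  have hN : (a * b * N : ℝ) < (a + b) * p ^ e := by
    by_contra! hle
    exact hnot (X_pow_add_X_pow_pow_mem_span_pow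
      (forall_le_mul_or_le_mul_sub_of_add_mul_le ha (by exact_mod_cast hle)))
  have hab : (0 : ℝ) < a * b := by positivity
  have h2 : (N : ℝ) < (1 / a + 1 / b) * p ^ e := by
    rw [div_add_div _ _ (by positivity) (by positivity), div_mul_eq_mul_div, lt_div_iff₀ hab]
    linarith
  linarith

/- With `N = (u + v) p^j - 1`: for `v = 0` take `i = N`; otherwise `i = u p^j`, and by Lucas
`C(N, i) ≡ C(u + v - 1, u) (mod p)`. -/
theorem fpurePair_div_of_mul_lt (hp : p.Prime) [CharP k p] (ha : 2 ≤ a) (hb : 2 ≤ b) {u v : ℕ}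
    (hu : a * u < p) (hv : b * v < p) :
    FPurePair (MvPowerSeries (Fin 2) k) p
      (Ideal.span {(X 0 : MvPowerSeries (Fin 2) k) ^ a + X 1 ^ b}) ((u + v : ℕ) / p) := by
  refine fpurePair_X_pow_add_X_pow_of_forall_choose hp (by omega) ⟨1, fun e he => ?_⟩
  obtain ⟨j, rfl⟩ := Nat.exists_eq_add_of_le' he
  have hP : 0 < p ^ j := pow_pos hp.pos j
  have huP : a * (u * p ^ j) < p ^ (j + 1) := by
    rw [← mul_assoc, pow_succ']
    exact Nat.mul_lt_mul_of_pos_right hu hP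
  refine ⟨(u + v) * p ^ j - 1, ?_⟩
  rcases Nat.eq_zero_or_pos v with rfl | hv0
  · refine ⟨u * p ^ j - 1, by simp [floor_div_mul_pow_sub_one_le hp.pos], le_rfl, ?_,
      by simpa using pow_pos hp.pos (j + 1), by simp [hp.one_lt.ne']⟩
    exact lt_of_le_of_lt (Nat.mul_le_mul_left a (Nat.sub_le _ 1)) huP
  obtain ⟨v, rfl⟩ := Nat.exists_eq_add_of_le' hv0
  have hN : (u + (v + 1)) * p ^ j - 1 = (u + v) * p ^ j + (p ^ j - 1) := by
    rw [show (u + (v + 1)) * p ^ j = (u + v) * p ^ j + p ^ j by ring]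
    omega
  have hvP : b * ((v + 1) * p ^ j - 1) < p ^ (j + 1) := by
    rw [pow_succ']
    calc b * ((v + 1) * p ^ j - 1) ≤ b * (v + 1) * p ^ j := by
          rw [mul_assoc]; exact Nat.mul_le_mul_left b (Nat.sub_le _ 1)
      _ < p * p ^ j := Nat.mul_lt_mul_of_pos_right hv hP
  have huv : u + v < p := by nlinarith
  refine ⟨u * p ^ j, floor_div_mul_pow_sub_one_le hp.pos _ _, ?_, huP, ?_, ?_⟩
  · rw [hN]; nlinarith
  · rwa [hN, show (u + v) * p ^ j + (p ^ j - 1) - u * p ^ j = (v + 1) * p ^ j - 1 by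
      rw [add_mul, add_mul, one_mul]; omega]
  · rw [hN]
    exact hp.not_dvd_choose_mul_pow_add_pow_sub_one huv (Nat.le_add_right u v) j

/- Writing `p = abK + 1` and `G = 1 + p + ⋯ + p^(e-1)`, so that `p^e - 1 = abKG`, the choice
`N = (a + b)KG`, `i = bKG` is exact: `⌊(1/a + 1/b)(p^e - 1)⌋ = N` and `ai = b(N - i) = p^e - 1`. -/
theorem fpurePair_one_div_add_one_div (hp : p.Prime) [CharP k p] (ha : 2 ≤ a) (hb : 2 ≤ b)
    (hmod : p % (a * b) = 1) :
    FPurePair (MvPowerSeries (Fin 2) k) p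
      (Ideal.span {(X 0 : MvPowerSeries (Fin 2) k) ^ a + X 1 ^ b}) (1 / a + 1 / b) := by
  obtain ⟨K, hK⟩ : ∃ K, p = a * b * K + 1 := ⟨p / (a * b), by rw [← hmod, Nat.div_add_mod]⟩
  refine fpurePair_X_pow_add_X_pow_of_forall_choose hp (by omega) ⟨0, fun e _ => ?_⟩
  set G := ∑ i ∈ Finset.range e, p ^ i
  have hG : G * (a * b * K) + 1 = p ^ e := by
    simp only [G, hK]
    exact geom_sum_mul_add _ _
  have hGR : (G : ℝ) * (a * b * K) + 1 = (p : ℝ) ^ e := by exact_mod_cast hG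
  have hfloor : (1 / a + 1 / b) * ((p : ℝ) ^ e - 1) = ((b * K + a * K) * G : ℕ) := by
    rw [← hGR]
    push_cast
    field_simp
    ring
  have hai : a * (b * K * G) < p ^ e := by rw [← hG]; nlinarith
  have hbi : b * ((b * K + a * K) * G - b * K * G) < p ^ e := by
    rw [add_mul, Nat.add_sub_cancel_left, ← hG]; nlinarith
  have hab : a + b ≤ a * b := by nlinarith
  have hc : b * K + a * K < p := by rw [hK]; nlinarith [Nat.mul_le_mul_right K hab]
  refine ⟨(b * K + a * K) * G, b * K * G, by rw [hfloor, Nat.floor_natCast],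
    Nat.mul_le_mul_right _ (Nat.le_add_right _ _), hai, hbi, ?_⟩
  exact hp.not_dvd_choose_mul_geom_sum hc (Nat.le_add_right _ _) e

end BinomialSeries

theorem stmt11_general (k : Type*) [Field k] (p : ℕ) (hp : p.Prime) [CharP k p]
    (a b : ℕ) (ha : 2 ≤ a) (hb : 2 ≤ b)
    (r : ℕ) (hr : r = ⌈(p : ℝ) / a⌉₊ + ⌈(p : ℝ) / b⌉₊ - 1) :
    (((r : ℝ) - 1) / p ≤
        fpt (MvPowerSeries (Fin 2) k) p
          (Ideal.span {(MvPowerSeries.X 0 : MvPowerSeries (Fin 2) k) ^ a +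
            MvPowerSeries.X 1 ^ b}) ∧
      fpt (MvPowerSeries (Fin 2) k) p
          (Ideal.span {(MvPowerSeries.X 0 : MvPowerSeries (Fin 2) k) ^ a +
            MvPowerSeries.X 1 ^ b}) ≤ min ((r : ℝ) / p) (1 / a + 1 / b)) ∧
    (p % (a * b) = 1 →
      fpt (MvPowerSeries (Fin 2) k) p
          (Ideal.span {(MvPowerSeries.X 0 : MvPowerSeries (Fin 2) k) ^ a +
            MvPowerSeries.X 1 ^ b}) = 1 / a + 1 / b) := by
  have ha0 : 0 < a := by omega
  have hb0 : 0 < b := by omega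
  have hupper (t : ℝ) (ht : FPurePair (MvPowerSeries (Fin 2) k) p
      (Ideal.span {MvPowerSeries.X 0 ^ a + MvPowerSeries.X 1 ^ b}) t) :
      t ≤ min ((r : ℝ) / p) (1 / a + 1 / b) :=
    le_min (ht.le_div_of_forall_le_mul_or_le_mul_sub hp
        (hr ▸ forall_le_mul_or_le_mul_sub_ceil ha0 hb0 p))
      (ht.le_one_div_add_one_div hp ha0 hb0)
  have hca : 0 < ⌈(p : ℝ) / a⌉₊ := (lt_ceil_div_iff ha0).mpr (by simpa using hp.pos)
  have hcb : 0 < ⌈(p : ℝ) / b⌉₊ := (lt_ceil_div_iff hb0).mpr (by simpa using hp.pos)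
  have hu := (lt_ceil_div_iff (n := p) (j := ⌈(p : ℝ) / a⌉₊ - 1) ha0).mp (by omega)
  have hv := (lt_ceil_div_iff (n := p) (j := ⌈(p : ℝ) / b⌉₊ - 1) hb0).mp (by omega)
  have hr1 : (r : ℝ) - 1 = ((⌈(p : ℝ) / a⌉₊ - 1 + (⌈(p : ℝ) / b⌉₊ - 1) : ℕ) : ℝ) := by
    rw [← Nat.cast_one (R := ℝ), ← Nat.cast_sub (by omega)]
    congr 1
    omega
  refine ⟨⟨?_, fpt_le (by positivity) hupper⟩, fun hmod => le_antisymm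
    ((fpt_le (by positivity) hupper).trans (min_le_right _ _))
    (le_fpt hupper (by positivity) (fpurePair_one_div_add_one_div hp ha hb hmod))⟩
  rw [hr1]
  exact le_fpt hupper (by positivity) (fpurePair_div_of_mul_lt hp ha hb hu hv)

/-- for `f = Xᵃ + Yᵇ` in `R = k[[X,Y]]` with `a, b ≥ 2` and
`r = ⌈p/a⌉ + ⌈p/b⌉ - 1`, one has `(r-1)/p ≤ c((f)) ≤ min (r/p) (1/a + 1/b)`;
in particular `c((f)) = 1/a + 1/b` whenever `p ≡ 1 (mod ab)`. -/
theorem stmt11 (k : Type*) [Field k] (p : ℕ) (hp : p.Prime) [CharP k p]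
    (hkF : FFinite k p) (a b : ℕ) (ha : 2 ≤ a) (hb : 2 ≤ b)
    (r : ℕ) (hr : r = ⌈(p : ℝ) / a⌉₊ + ⌈(p : ℝ) / b⌉₊ - 1) :
    (((r : ℝ) - 1) / p ≤
        fpt (MvPowerSeries (Fin 2) k) p
          (Ideal.span {(MvPowerSeries.X 0 : MvPowerSeries (Fin 2) k) ^ a +
            MvPowerSeries.X 1 ^ b}) ∧
      fpt (MvPowerSeries (Fin 2) k) p
          (Ideal.span {(MvPowerSeries.X 0 : MvPowerSeries (Fin 2) k) ^ a +
            MvPowerSeries.X 1 ^ b}) ≤ min ((r : ℝ) / p) (1 / a + 1 / b)) ∧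
    (p % (a * b) = 1 →
      fpt (MvPowerSeries (Fin 2) k) p
          (Ideal.span {(MvPowerSeries.X 0 : MvPowerSeries (Fin 2) k) ^ a +
            MvPowerSeries.X 1 ^ b}) = 1 / a + 1 / b) :=
  stmt11_general k p hp a b ha hb r hr
end
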